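/- arXiv:1603.03667 — 2 statements merged into one kernel-verified Lean document; each statement's English description precedes it below -/
import Mathlib

section
/- Let s = σ + it be a complex number with 0 < σ < 1 and |t| > 1. Then the periodized zeta function a ↦ F_s(a) is infinitely differentiable (C^∞) on the open interval (0,1). -/
open MeasureTheory Complex Real Set Filter

open Topology

noncomputable def Gk (w : ℂ) (t : ℝ) : ℂ := cexp (2*π*I*w - t) / (1 - cexp (2*π*I*w - t))

lemma denom_ne {w : ℂ} (hw0 : 0 < w.re) (hw1 : w.re < 1) {t : ℝ} (ht : 0 ≤ t) :
    1 - cexp (2*π*I*w - t) ≠ 0 := by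
  rw [sub_ne_zero]
  intro h
  rw [eq_comm, Complex.exp_eq_one_iff] at h
  obtain ⟨n, hn⟩ := h
  have him : 2 * π * w.re = ↑n * (2 * π) := by
    have := congrArg Complex.im hn
    simpa [Complex.mul_im, Complex.mul_re] using this
  have hre : w.re = (n : ℝ) := by
    have hpi := Real.pi_pos
    nlinarith [him]
  have h0 : (0:ℝ) < n := by rw [← hre]; exact hw0
  have h1 : (n:ℝ) < 1 := by rw [← hre]; exact hw1
  have h0' : (1:ℤ) ≤ n := by exact_mod_cast h0
  have h1' : (n:ℤ) < 1 := by exact_mod_cast h1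
  omega

lemma norm_exp_aux (w : ℂ) (t : ℝ) : ‖cexp (2*π*I*w - t)‖ = rexp (-(2*π*w.im) - t) := by
  rw [Complex.norm_exp]
  congr 1
  simp [Complex.sub_re, Complex.mul_re, Complex.mul_im]
  try ring

lemma exists_lower_bound {w₀ : ℂ} {ε : ℝ} (hε : 0 < ε)
    (hball : Metric.closedBall w₀ ε ⊆ {w : ℂ | 0 < w.re ∧ w.re < 1}) :
    ∃ c > 0, ∀ w ∈ Metric.closedBall w₀ ε, ∀ t : ℝ, 0 ≤ t →
      c ≤ ‖1 - cexp (2*π*I*w - t)‖ := by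
  set M : ℝ := |w₀.im| + ε with hM
  set T : ℝ := 2*π*M + Real.log 2 with hT
  have hM0 : 0 ≤ M := by positivity
  have hT0 : 0 ≤ T := by
    have := Real.log_pos (by norm_num : (1:ℝ) < 2)
    have := Real.pi_pos
    positivity
  -- compact part
  have hK : IsCompact (Metric.closedBall w₀ ε ×ˢ Icc (0:ℝ) T) :=
    (isCompact_closedBall _ _).prod isCompact_Icc
  have hne : (Metric.closedBall w₀ ε ×ˢ Icc (0:ℝ) T).Nonempty :=
    ⟨(w₀, 0), Metric.mem_closedBall_self hε.le, by simp [hT0]⟩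
  have hcont : Continuous fun p : ℂ × ℝ => ‖1 - cexp (2*π*I*p.1 - p.2)‖ := by
    fun_prop
  obtain ⟨p₀, hp₀K, hp₀⟩ := hK.exists_isMinOn hne hcont.continuousOn
  have hc₁ : 0 < ‖1 - cexp (2*π*I*p₀.1 - p₀.2)‖ := by
    rw [norm_pos_iff]
    obtain ⟨hw, ht⟩ := hp₀K
    exact denom_ne (hball hw).1 (hball hw).2 ht.1
  refine ⟨min ‖1 - cexp (2*π*I*p₀.1 - p₀.2)‖ (1/2), by positivity, fun w hw t ht => ?_⟩
  have hp₀' := isMinOn_iff.mp hp₀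
  rcases le_total t T with hle | hge
  · exact (min_le_left _ _).trans (hp₀' (w, t) ⟨hw, ht, hle⟩)
  · refine (min_le_right _ _).trans ?_
    have h1 : ‖cexp (2*π*I*w - t)‖ ≤ 1/2 := by
      rw [norm_exp_aux]
      have him : |w.im| ≤ M := by
        have := abs_sub_abs_le_abs_sub w.im w₀.im
        have h2 : |w.im - w₀.im| ≤ ε := by
          have := Complex.abs_im_le_norm (w - w₀)
          simp only [Complex.sub_im] at this
          exact this.trans (by simpa [Complex.dist_eq] using hw)
        rw [hM]; linarith
      have : -(2*π*w.im) - t ≤ -Real.log 2 := by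
        have h3 : -(2*π*w.im) ≤ 2*π*M := by
          have := neg_abs_le w.im
          have hpi := Real.pi_pos
          nlinarith [abs_nonneg w.im, him]
        linarith [hge, hT ▸ hge]
      calc rexp (-(2*π*w.im) - t) ≤ rexp (-Real.log 2) := Real.exp_le_exp.mpr this
        _ = 1/2 := by rw [Real.exp_neg, Real.exp_log]; norm_num; norm_num
    calc (1:ℝ)/2 = 1 - 1/2 := by norm_num
      _ ≤ ‖(1:ℂ)‖ - ‖cexp (2*π*I*w - t)‖ := by rw [norm_one]; linarith
      _ ≤ ‖1 - cexp (2*π*I*w - t)‖ := norm_sub_norm_le _ _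





lemma hasSum_Gk {a : ℝ} (ha : a ∈ Ioo (0:ℝ) 1) {t : ℝ} (ht : t ∈ Ioi (0:ℝ)) :
    HasSum (fun i : ℕ => (if i = 0 then 0 else cexp (2*π*I*a*i)) * rexp (-(i:ℝ) * t))
      (Gk ↑a t) := by
  set z₀ : ℂ := cexp (2*π*I*a - t) with hz₀
  have hnorm : ‖z₀‖ < 1 := by
    rw [hz₀, Complex.norm_exp]
    have : (2*(π:ℂ)*I*a - t).re = -t := by
      simp [Complex.mul_re, Complex.mul_im]
    rw [this]
    exact Real.exp_lt_one_iff.mpr (neg_lt_zero.mpr ht)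
  have hgeo : HasSum (fun n : ℕ => z₀ ^ n) (1 - z₀)⁻¹ := hasSum_geometric_of_norm_lt_one hnorm
  have h2 := hasSum_ite_sub_hasSum hgeo 0
  simp only [pow_zero] at h2
  have hd : 1 - z₀ ≠ 0 := denom_ne (by simpa using ha.1) (by simpa using ha.2) (le_of_lt ht)
  have hval : (1 - z₀)⁻¹ - 1 = Gk ↑a t := by
    rw [Gk, ← hz₀]
    field_simp
    ring
  rw [hval] at h2
  refine h2.congr_fun fun i => ?_
  rcases eq_or_ne i 0 with rfl | hi
  · simp
  · simp only [hi, if_false]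
    rw [← Complex.exp_nat_mul, Complex.ofReal_exp, ← Complex.exp_add]
    congr 1
    push_cast
    ring

lemma mellin_Gk {a : ℝ} (ha : a ∈ Ioo (0:ℝ) 1) {z : ℂ} (hz : 1 < z.re) :
    mellin (Gk ↑a) z = Complex.Gamma z * HurwitzZeta.expZeta ↑a z := by
  have hz0 : 0 < z.re := lt_trans one_pos hz
  have key := hasSum_mellin (a := fun i : ℕ => if i = 0 then 0 else cexp (2*π*I*a*i))
    (p := fun i : ℕ => (i : ℝ)) (F := Gk ↑a) (s := z)
    (fun i => by rcases eq_or_ne i 0 with rfl | hi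
                 · exact Or.inl (by simp)
                 · exact Or.inr (by positivity)) hz0
    (fun t ht => hasSum_Gk ha ht) ?_
  · have key2 := (HurwitzZeta.hasSum_expZeta_of_one_lt_re a hz).mul_left (Complex.Gamma z)
    refine HasSum.unique (key.congr_fun fun i => ?_) key2
    rcases eq_or_ne i 0 with rfl | hi
    · simp [Complex.zero_cpow (fun h => by simp [h] at hz0 : z ≠ 0)]
    · simp only [hi, if_false]
      rw [mul_div_assoc]
      norm_cast
  · refine Summable.of_nonneg_of_le (fun i => by positivity) (fun i => ?_)
      (Real.summable_one_div_nat_rpow.mpr hz)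
    rcases eq_or_ne i 0 with rfl | hi
    · simp; positivity
    · simp only [hi, if_false]
      have : ‖cexp (2*π*I*a*i)‖ = 1 := by
        rw [Complex.norm_exp]
        have : (2*(π:ℂ)*I*a*i).re = 0 := by simp [Complex.mul_re, Complex.mul_im]
        rw [this, Real.exp_zero]
      rw [this]

lemma continuousOn_Gk {a : ℝ} (ha : a ∈ Ioo (0:ℝ) 1) : ContinuousOn (Gk ↑a) (Ici 0) := by
  apply ContinuousOn.div
  · exact (Complex.continuous_exp.comp (continuous_const.sub Complex.continuous_ofReal)).continuousOn
  · exact (continuous_const.sub (Complex.continuous_exp.comp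
      (continuous_const.sub Complex.continuous_ofReal))).continuousOn
  · exact fun t ht => denom_ne (by simpa using ha.1) (by simpa using ha.2) ht

lemma Gk_isBigO_atTop {a : ℝ} (ha : a ∈ Ioo (0:ℝ) 1) :
    (Gk ↑a) =O[atTop] fun t : ℝ => rexp (-1 * t) := by
  rw [Asymptotics.isBigO_iff]
  refine ⟨2, ?_⟩
  filter_upwards [eventually_ge_atTop (Real.log 2)] with t htl
  have hnorm : ‖cexp (2*π*I*(a:ℂ) - t)‖ = rexp (-t) := by
    rw [norm_exp_aux]; simp
  have hlog : rexp (-Real.log 2) = 1/2 := by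
    rw [Real.exp_neg, Real.exp_log] <;> norm_num
  have hle : rexp (-t) ≤ 1/2 := by
    rw [← hlog]; exact Real.exp_le_exp.mpr (by linarith)
  have hd : (1:ℝ)/2 ≤ ‖1 - cexp (2*π*I*(a:ℂ) - t)‖ := by
    calc (1:ℝ)/2 = 1 - 1/2 := by norm_num
      _ ≤ ‖(1:ℂ)‖ - ‖cexp (2*π*I*(a:ℂ) - t)‖ := by rw [norm_one, hnorm]; linarith
      _ ≤ _ := norm_sub_norm_le _ _
  rw [Gk, norm_div, hnorm, Real.norm_eq_abs, neg_one_mul,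
    _root_.abs_of_nonneg (Real.exp_nonneg _)]
  rw [div_le_iff₀ (by linarith : (0:ℝ) < ‖1 - cexp (2*π*I*(a:ℂ) - t)‖)]
  nlinarith [Real.exp_nonneg (-t)]

lemma Gk_isBigO_zero {a : ℝ} (ha : a ∈ Ioo (0:ℝ) 1) :
    (Gk ↑a) =O[nhdsWithin 0 (Ioi 0)] fun t : ℝ => t ^ (-(0:ℝ)) := by
  have h1 : Tendsto (Gk ↑a) (nhdsWithin 0 (Ioi 0)) (𝓝 (Gk ↑a 0)) := by
    have := (continuousOn_Gk ha) 0 (self_mem_Ici)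
    exact this.mono_left (nhdsWithin_mono _ Ioi_subset_Ici_self)
  have h2 := h1.isBigO_one (F := ℝ)
  refine h2.congr' (EventuallyEq.rfl) ?_
  filter_upwards with x
  rw [neg_zero, Real.rpow_zero]

lemma mellin_Gk_differentiableAt {a : ℝ} (ha : a ∈ Ioo (0:ℝ) 1) {z : ℂ} (hz : 0 < z.re) :
    DifferentiableAt ℂ (mellin (Gk ↑a)) z := by
  refine mellin_differentiableAt_of_isBigO_rpow (a := z.re + 1) (b := 0)
    ?_ ?_ (by linarith) (Gk_isBigO_zero ha) hz
  · exact ((continuousOn_Gk ha).mono Ioi_subset_Ici_self).locallyIntegrableOn measurableSet_Ioi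
  · exact (Gk_isBigO_atTop ha).trans (isLittleO_exp_neg_mul_rpow_atTop one_pos _).isBigO

lemma coe_ne_zero_unitAddCircle {a : ℝ} (ha : a ∈ Ioo (0:ℝ) 1) :
    (↑a : UnitAddCircle) ≠ 0 := by
  intro h
  rw [AddCircle.coe_eq_zero_iff] at h
  obtain ⟨n, hn⟩ := h
  rw [zsmul_eq_mul, mul_one] at hn
  have h0 : (0:ℝ) < n := hn ▸ ha.1
  have h1 : (n:ℝ) < 1 := hn ▸ ha.2
  have : (0:ℤ) < n := by exact_mod_cast h0
  have : (n:ℤ) < 1 := by exact_mod_cast h1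
  omega

lemma expZeta_eq_mellin {a : ℝ} (ha : a ∈ Ioo (0:ℝ) 1) {z : ℂ} (hz : 0 < z.re) :
    HurwitzZeta.expZeta ↑a z = (Complex.Gamma z)⁻¹ * mellin (Gk ↑a) z := by
  set U : Set ℂ := {w : ℂ | 0 < w.re} with hU
  have hUopen : IsOpen U := isOpen_lt continuous_const Complex.continuous_re
  have hUpre : IsPreconnected U := (convex_halfSpace_re_gt 0).isPreconnected
  have hf : AnalyticOnNhd ℂ (HurwitzZeta.expZeta ↑a) U :=
    ((HurwitzZeta.differentiable_expZeta_of_ne_zero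
      (coe_ne_zero_unitAddCircle ha)).differentiableOn).analyticOnNhd hUopen
  have hg : AnalyticOnNhd ℂ (fun w => (Complex.Gamma w)⁻¹ * mellin (Gk ↑a) w) U := by
    refine DifferentiableOn.analyticOnNhd (fun w hw => ?_) hUopen
    exact ((Complex.differentiable_one_div_Gamma w).mul
      (mellin_Gk_differentiableAt ha hw)).differentiableWithinAt
  have h2 : (2:ℂ) ∈ U := by simp [hU]
  have hev : HurwitzZeta.expZeta ↑a =ᶠ[𝓝 (2:ℂ)]
      fun w => (Complex.Gamma w)⁻¹ * mellin (Gk ↑a) w := by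
    have hV : {w : ℂ | 1 < w.re} ∈ 𝓝 (2:ℂ) :=
      (isOpen_lt continuous_const Complex.continuous_re).mem_nhds (by simp)
    filter_upwards [hV] with w hw
    rw [mellin_Gk ha hw, ← mul_assoc, inv_mul_cancel₀, one_mul]
    refine Complex.Gamma_ne_zero fun m hm => ?_
    have : (1:ℝ) < w.re := hw
    rw [hm] at this
    simp at this
    linarith [this, Nat.cast_nonneg (α := ℝ) m]
  exact hf.eqOn_of_preconnected_of_eventuallyEq hg hUpre h2 hev hz


lemma continuousOn_Gk' {w : ℂ} (hw0 : 0 < w.re) (hw1 : w.re < 1) :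
    ContinuousOn (Gk w) (Ici 0) := by
  apply ContinuousOn.div
  · exact (Complex.continuous_exp.comp (continuous_const.sub Complex.continuous_ofReal)).continuousOn
  · exact (continuous_const.sub (Complex.continuous_exp.comp
      (continuous_const.sub Complex.continuous_ofReal))).continuousOn
  · exact fun t ht => denom_ne hw0 hw1 ht

lemma mellin_Gk_w_differentiableAt {s : ℂ} (hs : 0 < s.re) {w₀ : ℂ}
    (hw0 : 0 < w₀.re) (hw1 : w₀.re < 1) :
    DifferentiableAt ℂ (fun w => mellin (Gk w) s) w₀ := by
  simp_rw [mellin, smul_eq_mul]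
  set ε : ℝ := min (w₀.re/2) ((1 - w₀.re)/2) with hεdef
  have hε : 0 < ε := lt_min (by linarith) (by linarith)
  have hball : Metric.closedBall w₀ ε ⊆ {w : ℂ | 0 < w.re ∧ w.re < 1} := by
    intro w hw
    have h1 : |(w - w₀).re| ≤ ε := (Complex.abs_re_le_norm _).trans
      (by simpa [Complex.dist_eq] using hw)
    rw [Complex.sub_re, abs_le] at h1
    have e1 : ε ≤ w₀.re/2 := min_le_left _ _
    have e2 : ε ≤ (1 - w₀.re)/2 := min_le_right _ _
    exact ⟨by linarith [h1.1], by linarith [h1.2]⟩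
  obtain ⟨c, hc, hcb⟩ := exists_lower_bound hε hball
  set M : ℝ := |w₀.im| + ε with hMdef
  have hexp_bd : ∀ w ∈ Metric.closedBall w₀ ε, ∀ t : ℝ, 0 ≤ t →
      ‖cexp (2*π*I*w - t)‖ ≤ rexp (2*π*M) * rexp (-t) := by
    intro w hw t ht
    rw [norm_exp_aux, ← Real.exp_add]
    apply Real.exp_le_exp.mpr
    have him : |w.im| ≤ M := by
      have h2 : |w.im - w₀.im| ≤ ε := by
        have := Complex.abs_im_le_norm (w - w₀)
        simp only [Complex.sub_im] at this
        exact this.trans (by simpa [Complex.dist_eq] using hw)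
      rw [abs_le] at h2 ⊢
      constructor <;> [linarith [abs_le.mp (le_refl |w₀.im|), neg_abs_le w₀.im, h2.1];
        linarith [le_abs_self w₀.im, h2.2]]
    have hpi := Real.pi_pos
    have := neg_abs_le w.im
    nlinarith [him, abs_nonneg w.im]
  -- the parametric integral machinery
  set F : ℂ → ℝ → ℂ := fun w t => (t:ℂ)^(s-1) * Gk w t with hF
  set F' : ℂ → ℝ → ℂ := fun w t =>
    (t:ℂ)^(s-1) * (2*π*I * cexp (2*π*I*w - t) / (1 - cexp (2*π*I*w - t))^2) with hF'
  have hpow_cont : ContinuousOn (fun t : ℝ => (t:ℂ)^(s-1)) (Ioi 0) := fun t ht =>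
    (Complex.continuousAt_ofReal_cpow_const t (s-1) (Or.inr (ne_of_gt ht))).continuousWithinAt
  have hpow_norm : ∀ t : ℝ, 0 < t → ‖(t:ℂ)^(s-1)‖ = t ^ (s.re - 1) := by
    intro t ht
    rw [Complex.norm_cpow_eq_rpow_re_of_pos ht]
    norm_num
  have hGamma : Integrable (fun t : ℝ => rexp (-t) * t ^ (s.re - 1))
      (volume.restrict (Ioi 0)) := Real.GammaIntegral_convergent hs
  set bound : ℝ → ℝ := fun t => rexp (-t) * t ^ (s.re - 1) * (2*π*rexp (2*π*M)/c^2)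
    with hbound_def
  have key := hasDerivAt_integral_of_dominated_loc_of_deriv_le (F := F) (F' := F')
    (x₀ := w₀) (s := Metric.ball w₀ ε) (μ := volume.restrict (Ioi 0)) (bound := bound) (Metric.ball_mem_nhds w₀ hε) ?_ ?_ ?_ ?_ ?_ ?_
  · exact key.2.differentiableAt
  · -- hF_meas
    filter_upwards [Metric.closedBall_mem_nhds w₀ hε] with w hw
    have hwm := hball hw
    exact (hpow_cont.mul ((continuousOn_Gk' hwm.1 hwm.2).mono
      Ioi_subset_Ici_self)).aestronglyMeasurable measurableSet_Ioi
  · -- hF_int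
    refine Integrable.mono' (hGamma.mul_const (rexp (2*π*M)/c)) ?_ ?_
    · have hwm := hball (Metric.mem_closedBall_self hε.le)
      exact (hpow_cont.mul ((continuousOn_Gk' hwm.1 hwm.2).mono
        Ioi_subset_Ici_self)).aestronglyMeasurable measurableSet_Ioi
    · filter_upwards [ae_restrict_mem measurableSet_Ioi] with t ht
      have ht' : (0:ℝ) < t := ht
      rw [hF, norm_mul, hpow_norm t ht', Gk, norm_div]
      have h1 := hexp_bd w₀ (Metric.mem_closedBall_self hε.le) t ht'.le
      have h2 := hcb w₀ (Metric.mem_closedBall_self hε.le) t ht'.le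
      have h3 : 0 < ‖1 - cexp (2*π*I*w₀ - t)‖ := lt_of_lt_of_le hc h2
      have h4 : ‖cexp (2*π*I*w₀ - t)‖ / ‖1 - cexp (2*π*I*w₀ - t)‖ ≤
          rexp (2*π*M) * rexp (-t) / c := by
        apply div_le_div₀ (by positivity) h1 hc h2
      calc t ^ (s.re - 1) * (‖cexp (2*π*I*w₀ - t)‖ / ‖1 - cexp (2*π*I*w₀ - t)‖)
          ≤ t ^ (s.re - 1) * (rexp (2*π*M) * rexp (-t) / c) := by
            apply mul_le_mul_of_nonneg_left h4 (Real.rpow_nonneg ht'.le _)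
        _ = rexp (-t) * t ^ (s.re - 1) * (rexp (2*π*M)/c) := by ring
  · -- hF'_meas
    have hwm := hball (Metric.mem_closedBall_self hε.le)
    refine (hpow_cont.mul (ContinuousOn.div ?_ ?_ ?_)).aestronglyMeasurable measurableSet_Ioi
    · fun_prop
    · fun_prop
    · intro t ht
      exact pow_ne_zero 2 (denom_ne hwm.1 hwm.2 (le_of_lt ht))
  · -- h_bound
    filter_upwards [ae_restrict_mem measurableSet_Ioi] with t ht w hw
    have hw' : w ∈ Metric.closedBall w₀ ε := Metric.ball_subset_closedBall hw
    have ht' : (0:ℝ) < t := ht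
    rw [hF', norm_mul, hpow_norm t ht', norm_div, norm_mul]
    have h1 := hexp_bd w hw' t ht'.le
    have h2 := hcb w hw' t ht'.le
    have hI : ‖(2*(π:ℂ)*I)‖ = 2*π := by
      simp [_root_.abs_of_nonneg Real.pi_pos.le]
    have hsq : c^2 ≤ ‖(1 - cexp (2*π*I*w - t))^2‖ := by
      rw [norm_pow]
      exact pow_le_pow_left₀ hc.le h2 2
    have h4 : ‖2*(π:ℂ)*I‖ * ‖cexp (2*π*I*w - t)‖ / ‖(1 - cexp (2*π*I*w - t))^2‖ ≤
        2*π * (rexp (2*π*M) * rexp (-t)) / c^2 := by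
      apply div_le_div₀ (by positivity) ?_ (by positivity) hsq
      rw [hI]
      have hpi := Real.pi_pos
      nlinarith [norm_nonneg (cexp (2*π*I*w - t)), h1]
    calc t ^ (s.re - 1) * (‖2*(π:ℂ)*I‖ * ‖cexp (2*π*I*w - t)‖ / ‖(1 - cexp (2*π*I*w - t))^2‖)
        ≤ t ^ (s.re - 1) * (2*π * (rexp (2*π*M) * rexp (-t)) / c^2) := by
          apply mul_le_mul_of_nonneg_left h4 (Real.rpow_nonneg ht'.le _)
      _ = bound t := by rw [hbound_def]; ring
  · -- bound integrable
    exact hGamma.mul_const _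
  · -- h_diff
    filter_upwards [ae_restrict_mem measurableSet_Ioi] with t ht w hw
    have hw' := hball (Metric.ball_subset_closedBall hw)
    have ht' : (0:ℝ) < t := ht
    have hlin : HasDerivAt (fun w : ℂ => 2*π*I*w - t) (2*π*I) w := by
      simpa using ((hasDerivAt_id w).const_mul (2*π*I)).sub_const (t:ℂ)
    have hu : HasDerivAt (fun w : ℂ => cexp (2*π*I*w - t))
        (cexp (2*π*I*w - t) * (2*π*I)) w := by
      simpa [mul_comm] using hlin.cexp
    have hv : HasDerivAt (fun w : ℂ => 1 - cexp (2*π*I*w - t))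
        (-(cexp (2*π*I*w - t) * (2*π*I))) w := by
      exact hu.const_sub 1
    have hden : 1 - cexp (2*π*I*w - t) ≠ 0 := denom_ne hw'.1 hw'.2 ht'.le
    have hdiv := hu.div hv hden
    have : HasDerivAt (fun w : ℂ => Gk w t)
        (2*π*I * cexp (2*π*I*w - t) / (1 - cexp (2*π*I*w - t))^2) w := by
      refine HasDerivAt.congr_deriv (by exact hdiv) ?_
      ring
    simpa [hF, hF'] using this.const_mul ((t:ℂ)^(s-1))


/-- The periodized zeta function `F s a`, i.e. the analytic continuation in `s` of
`∑ k ≥ 1, exp (2πika) / k ^ s`, realized as Mathlib's `expZeta` at the point `a` of the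
unit additive circle. -/
noncomputable def periodizedZeta (s : ℂ) (a : ℝ) : ℂ := HurwitzZeta.expZeta (a : UnitAddCircle) s


/-- for `0 < Re s < 1` and `|Im s| > 1`, the periodized zeta function
`a ↦ F_s(a)` is `C^∞` on the open interval `(0,1)`. -/
theorem periodizedZeta_contDiffOn (s : ℂ) (hσ0 : 0 < s.re) (hσ1 : s.re < 1) (ht : 1 < |s.im|) :
    ContDiffOn ℝ (⊤ : ℕ∞) (periodizedZeta s) (Set.Ioo (0 : ℝ) 1) := by
  set V : Set ℂ := {w : ℂ | 0 < w.re ∧ w.re < 1} with hV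
  have hVopen : IsOpen V := by
    have h1 : IsOpen {w : ℂ | 0 < w.re} := isOpen_lt continuous_const Complex.continuous_re
    have h2 : IsOpen {w : ℂ | w.re < 1} := isOpen_lt Complex.continuous_re continuous_const
    exact (h1.inter h2 : IsOpen ({w : ℂ | 0 < w.re} ∩ {w : ℂ | w.re < 1}))
  set W : ℂ → ℂ := fun w => mellin (Gk w) s with hW
  have hWdiff : DifferentiableOn ℂ W V := fun w hw =>
    (mellin_Gk_w_differentiableAt hσ0 hw.1 hw.2).differentiableWithinAt
  have hWan : AnalyticOnNhd ℂ W V := hWdiff.analyticOnNhd hVopen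
  have hWc : ContDiffOn ℂ ⊤ W V := hWan.contDiffOn hVopen.uniqueDiffOn
  have hWcr : ContDiffOn ℝ (⊤ : ℕ∞) W V := (hWc.restrict_scalars ℝ).of_le le_top
  have hofReal : ContDiff ℝ (⊤ : ℕ∞) (fun a : ℝ => (a:ℂ)) := Complex.ofRealCLM.contDiff
  have hmaps : MapsTo (fun a : ℝ => (a:ℂ)) (Set.Ioo (0:ℝ) 1) V := fun a ha => by
    simp only [hV, mem_setOf_eq, Complex.ofReal_re]
    exact ⟨ha.1, ha.2⟩
  have hcomp : ContDiffOn ℝ (⊤ : ℕ∞) (fun a : ℝ => W ↑a) (Set.Ioo (0:ℝ) 1) :=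
    hWcr.comp (hofReal.contDiffOn) hmaps
  have hfinal : ContDiffOn ℝ (⊤ : ℕ∞) (fun a : ℝ => (Complex.Gamma s)⁻¹ * W ↑a)
      (Set.Ioo (0:ℝ) 1) := contDiffOn_const.mul hcomp
  refine hfinal.congr fun a ha => ?_
  exact expZeta_eq_mellin ha hσ0
end

section
/- Let s = σ + it be a complex number with 0 < σ < 1 and |t| > 1. Then the function a ↦ F_s(a) is integrable on (0,1) and its Fourier coefficients satisfy: the k-th Fourier coefficient F̂_s(k) = ∫_0^1 F_s(a) e^{-2πika} da equals k^{-s} for every integer k ≥ 1, and equals 0 for every integer k ≤ 0. -/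
/-!
For `a ∉ ℤ` the sums `∑_{n ≤ N} e^{2πina}` are bounded by `2 / |1 - e^{2πia}|`, so Abel summation
bounds the tails of `P_N(a) = ∑_{n ≤ N} e^{2πina} n^{-s}` by `≪ |s| σ⁻¹ |1 - e^{2πia}|⁻¹ m^{-σ}`,
locally uniformly in `s` with `σ = Re s > 0`. The limit is then holomorphic on `Re s > 0` and equals
`expZeta` for `Re s > 1`, hence on the whole half-plane.

Bounding the first `M ≈ |1 - e^{2πia}|⁻¹` terms of `P_N(a)` trivially and the rest by Abel summation
gives `|P_N(a)| ≪ a^{σ-1} + (1-a)^{σ-1}` uniformly in `N`, which is integrable on `(0,1)`. By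
dominated convergence the Fourier coefficients of `F_s` are the limits of those of the trigonometric
polynomials `P_N`.
-/

open MeasureTheory Complex Real Set Filter

open Topology

theorem norm_sum_Ico_smul_le_of_norm_partialSum_le {𝕜 E : Type*} [NormedRing 𝕜]
    [NormedAddCommGroup E] [Module 𝕜 E] [IsBoundedSMul 𝕜 E] {b : ℕ → 𝕜} {c : ℕ → E}
    {v : ℕ → ℝ} {B : ℝ} (hc : ∀ n, ‖∑ k ∈ Finset.range n, c k‖ ≤ B) (hb : ∀ k, ‖b k‖ ≤ v k)
    (hbv : ∀ k, ‖b k - b (k + 1)‖ ≤ v k - v (k + 1)) (m n : ℕ) :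
    ‖∑ k ∈ Finset.Ico m n, b k • c k‖ ≤ 2 * B * v m := by
  have hB : 0 ≤ B := by simpa using hc 0
  have hv : 0 ≤ v m := (norm_nonneg _).trans (hb m)
  rcases le_or_gt n m with hnm | hmn
  · rw [Finset.Ico_eq_empty_of_le hnm, Finset.sum_empty, norm_zero]
    positivity
  rw [Finset.sum_Ico_by_parts b c hmn]
  have htel : ∑ k ∈ Finset.Ico m (n - 1), (v k - v (k + 1)) = v m - v (n - 1) := by
    rw [← neg_sub, ← Finset.sum_Ico_sub v (by omega), ← Finset.sum_neg_distrib]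
    simp_rw [neg_sub]
  have hsum : ‖∑ k ∈ Finset.Ico m (n - 1), (b (k + 1) - b k) • ∑ i ∈ Finset.range (k + 1), c i‖
      ≤ (v m - v (n - 1)) * B := by
    rw [← htel, Finset.sum_mul]
    refine (norm_sum_le _ _).trans (Finset.sum_le_sum fun k _ => ?_)
    refine (norm_smul_le _ _).trans (mul_le_mul ?_ (hc _) (norm_nonneg _) ?_)
    · rw [norm_sub_rev]; exact hbv k
    · exact (norm_nonneg _).trans (hbv k)
  calc _ ≤ ‖b (n - 1)‖ * B + ‖b m‖ * B + (v m - v (n - 1)) * B := by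
        refine (norm_sub_le _ _).trans (add_le_add ((norm_sub_le _ _).trans ?_) hsum)
        exact add_le_add ((norm_smul_le _ _).trans (by gcongr; exact hc n))
          ((norm_smul_le _ _).trans (by gcongr; exact hc m))
    _ ≤ v (n - 1) * B + v m * B + (v m - v (n - 1)) * B := by gcongr <;> apply hb
    _ = 2 * B * v m := by ring

theorem norm_ofReal_cpow_neg_sub_le {s : ℂ} (hs : 0 < s.re) {x y : ℝ} (hx : 0 < x)
    (hxy : x ≤ y) :
    ‖(x : ℂ) ^ (-s) - (y : ℂ) ^ (-s)‖ ≤ ‖s‖ / s.re * (x ^ (-s.re) - y ^ (-s.re)) := by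
  have hs0 : -s ≠ 0 := neg_ne_zero.mpr fun h => by simp [h] at hs
  have hf : ∀ t ∈ Icc x y, HasDerivAt (fun t : ℝ => (t : ℂ) ^ (-s) - (x : ℂ) ^ (-s))
      (-s * (t : ℂ) ^ (-s - 1)) t := fun t ht =>
    (hasDerivAt_ofReal_cpow_const (hx.trans_le ht.1).ne' hs0).sub_const _
  have hB : ∀ t ∈ Icc x y, HasDerivAt (fun t : ℝ => ‖s‖ / s.re * (x ^ (-s.re) - t ^ (-s.re)))
      (‖s‖ * t ^ (-s.re - 1)) t := by
    intro t ht
    refine (((Real.hasDerivAt_rpow_const (.inl (hx.trans_le ht.1).ne')).const_sub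
      (x ^ (-s.re))).const_mul (‖s‖ / s.re)).congr_deriv ?_
    field_simp
  have hbound : ∀ t ∈ Ico x y, ‖-s * (t : ℂ) ^ (-s - 1)‖ ≤ ‖s‖ * t ^ (-s.re - 1) := by
    intro t ht
    rw [norm_mul, norm_neg, norm_cpow_eq_rpow_re_of_pos (hx.trans_le ht.1)]
    simp
  rw [norm_sub_rev]
  simpa using image_norm_le_of_norm_deriv_right_le_deriv_boundary'
    (fun t ht => (hf t ht).continuousAt.continuousWithinAt)
    (fun t ht => (hf t (Ico_subset_Icc_self ht)).hasDerivWithinAt) (by simp)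
    (fun t ht => (hB t ht).continuousAt.continuousWithinAt)
    (fun t ht => (hB t (Ico_subset_Icc_self ht)).hasDerivWithinAt) hbound
    (right_mem_Icc.mpr hxy)

theorem norm_sum_range_pow_succ_le {z : ℂ} (hz : ‖z‖ ≤ 1) (hz1 : z ≠ 1) (n : ℕ) :
    ‖∑ k ∈ Finset.range n, z ^ (k + 1)‖ ≤ 2 / ‖1 - z‖ := by
  have hz1' : 0 < ‖1 - z‖ := norm_pos_iff.mpr (sub_ne_zero.mpr hz1.symm)
  simp_rw [pow_succ', ← Finset.mul_sum, geom_sum_eq hz1, norm_mul, norm_div, ← norm_neg (z - 1),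
    neg_sub]
  calc ‖z‖ * (‖z ^ n - 1‖ / ‖1 - z‖) ≤ 1 * (2 / ‖1 - z‖) := by
        gcongr
        calc ‖z ^ n - 1‖ ≤ ‖z ^ n‖ + ‖(1 : ℂ)‖ := norm_sub_le _ _
          _ ≤ 2 := by rw [norm_pow, norm_one]; linarith [pow_le_one₀ (norm_nonneg z) hz (n := n)]
    _ = 2 / ‖1 - z‖ := one_mul _

noncomputable def polylogSum (z s : ℂ) (N : ℕ) : ℂ :=
  ∑ k ∈ Finset.range N, ((k + 1 : ℕ) : ℂ) ^ (-s) * z ^ (k + 1)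

theorem norm_natCast_succ_cpow_neg (s : ℂ) (k : ℕ) :
    ‖((k + 1 : ℕ) : ℂ) ^ (-s)‖ = ((k : ℝ) + 1) ^ (-s.re) := by
  rw [← ofReal_natCast, norm_cpow_eq_rpow_re_of_pos (by positivity)]
  simp

theorem norm_polylogSum_sub_le {z s : ℂ} (hz : ‖z‖ ≤ 1) (hz1 : z ≠ 1) (hs : 0 < s.re)
    {m n : ℕ} (hmn : m ≤ n) :
    ‖polylogSum z s n - polylogSum z s m‖
      ≤ 4 * ‖s‖ / (s.re * ‖1 - z‖) * ((m : ℝ) + 1) ^ (-s.re) := by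
  have hb : ∀ k : ℕ, ‖((k + 1 : ℕ) : ℂ) ^ (-s)‖ ≤ ‖s‖ / s.re * ((k : ℝ) + 1) ^ (-s.re) := by
    intro k
    rw [norm_natCast_succ_cpow_neg]
    exact le_mul_of_one_le_left (by positivity) ((one_le_div hs).mpr (re_le_norm s))
  have hbv : ∀ k : ℕ, ‖((k + 1 : ℕ) : ℂ) ^ (-s) - ((k + 1 + 1 : ℕ) : ℂ) ^ (-s)‖
      ≤ ‖s‖ / s.re * ((k : ℝ) + 1) ^ (-s.re) - ‖s‖ / s.re * (((k + 1 : ℕ) : ℝ) + 1) ^ (-s.re) := by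
    intro k
    have := norm_ofReal_cpow_neg_sub_le hs (x := k + 1) (y := k + 1 + 1) (by positivity)
      (by linarith)
    push_cast at this ⊢
    linarith
  have := norm_sum_Ico_smul_le_of_norm_partialSum_le (norm_sum_range_pow_succ_le hz hz1) hb hbv m n
  rw [polylogSum, polylogSum, ← Finset.sum_Ico_eq_sub _ hmn]
  simp only [smul_eq_mul] at this
  refine this.trans (le_of_eq ?_)
  field_simp
  ring

theorem tendsto_natCast_add_one_rpow_neg_atTop {σ : ℝ} (hσ : 0 < σ) :
    Tendsto (fun n : ℕ => ((n : ℝ) + 1) ^ (-σ)) atTop (𝓝 0) :=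
  (tendsto_rpow_neg_atTop hσ).comp (tendsto_atTop_add_const_right _ 1 tendsto_natCast_atTop_atTop)

/-- The polylogarithm `Li_s(z) = ∑_{n ≥ 1} zⁿ n⁻ˢ` as the limit of its partial sums, which also
covers conditional convergence; a junk value where they diverge. -/
noncomputable def polylog (z s : ℂ) : ℂ := limUnder atTop (polylogSum z s)

section Convergence

variable {z s : ℂ}

theorem tendsto_polylogSum_polylog (hz : ‖z‖ ≤ 1) (hz1 : z ≠ 1) (hs : 0 < s.re) :
    Tendsto (polylogSum z s) atTop (𝓝 (polylog z s)) := by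
  have hlim := (tendsto_natCast_add_one_rpow_neg_atTop hs).const_mul (4 * ‖s‖ / (s.re * ‖1 - z‖))
  rw [mul_zero] at hlim
  refine (cauchySeq_of_le_tendsto_0' _ (fun m n hmn => ?_) hlim).tendsto_limUnder
  rw [dist_comm, dist_eq_norm]
  exact norm_polylogSum_sub_le hz hz1 hs hmn

theorem norm_polylog_sub_polylogSum_le (hz : ‖z‖ ≤ 1) (hz1 : z ≠ 1) (hs : 0 < s.re) (m : ℕ) :
    ‖polylog z s - polylogSum z s m‖
      ≤ 4 * ‖s‖ / (s.re * ‖1 - z‖) * ((m : ℝ) + 1) ^ (-s.re) :=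
  le_of_tendsto ((tendsto_polylogSum_polylog hz hz1 hs).sub_const _).norm
    (eventually_atTop.2 ⟨m, fun _ hn => norm_polylogSum_sub_le hz hz1 hs hn⟩)

theorem tendstoLocallyUniformlyOn_polylogSum (hz : ‖z‖ ≤ 1) (hz1 : z ≠ 1) :
    TendstoLocallyUniformlyOn (fun N s => polylogSum z s N) (polylog z) atTop
      {s | 0 < s.re} := by
  rw [Metric.tendstoLocallyUniformlyOn_iff]
  intro ε hε s₀ (hs₀ : 0 < s₀.re)
  have hδ : 0 < ‖1 - z‖ := norm_pos_iff.mpr (sub_ne_zero.mpr hz1.symm)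
  let t : Set ℂ := {s | s₀.re / 2 < s.re} ∩ {s | ‖s‖ < ‖s₀‖ + 1}
  have ht : t ∈ 𝓝 s₀ :=
    ((isOpen_lt continuous_const continuous_re).inter (isOpen_lt continuous_norm continuous_const))
      |>.mem_nhds ⟨show s₀.re / 2 < s₀.re by linarith, show ‖s₀‖ < ‖s₀‖ + 1 by linarith⟩
  have hlim := (tendsto_natCast_add_one_rpow_neg_atTop (half_pos hs₀)).const_mul
    (4 * (‖s₀‖ + 1) / (s₀.re / 2 * ‖1 - z‖))
  rw [mul_zero] at hlim
  refine ⟨t, mem_nhdsWithin_of_mem_nhds ht, ?_⟩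
  filter_upwards [hlim.eventually (gt_mem_nhds hε)] with N hN s ⟨hσ, hnorm⟩
  change s₀.re / 2 < s.re at hσ
  change ‖s‖ < ‖s₀‖ + 1 at hnorm
  rw [dist_eq_norm]
  refine (norm_polylog_sub_polylogSum_le hz hz1 (by linarith) N).trans_lt (lt_of_le_of_lt ?_ hN)
  refine mul_le_mul ?_ ?_ (by positivity) (by positivity)
  · gcongr
  · exact Real.rpow_le_rpow_of_exponent_le (by linarith [N.cast_nonneg (α := ℝ)]) (by linarith)

theorem differentiableOn_polylog (hz : ‖z‖ ≤ 1) (hz1 : z ≠ 1) :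
    DifferentiableOn ℂ (polylog z) {s | 0 < s.re} :=
  (tendstoLocallyUniformlyOn_polylogSum hz hz1).differentiableOn
    (Eventually.of_forall fun N => by unfold polylogSum; fun_prop)
    (isOpen_lt continuous_const continuous_re)

end Convergence

theorem norm_exp_two_pi_I_mul (a : ℝ) : ‖cexp (2 * π * I * a)‖ = 1 := by
  rw [norm_exp]
  simp

theorem exp_two_pi_I_mul_ne_one {a : ℝ} (ha : (a : UnitAddCircle) ≠ 0) :
    cexp (2 * π * I * a) ≠ 1 := by
  rw [Ne, Complex.exp_eq_one_iff]
  rintro ⟨n, hn⟩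
  have han : (a : ℂ) = n := mul_left_cancel₀ two_pi_I_ne_zero (by linear_combination hn)
  exact ha ((AddCircle.coe_eq_zero_iff 1).mpr ⟨n, by simpa using (mod_cast han.symm : (n : ℝ) = a)⟩)

theorem tendsto_polylogSum_expZeta (a : ℝ) {s : ℂ} (hs : 1 < s.re) :
    Tendsto (polylogSum (cexp (2 * π * I * a)) s) atTop (𝓝 (HurwitzZeta.expZeta a s)) := by
  have hs0 : s ≠ 0 := fun h => by norm_num [h] at hs
  have h := (hasSum_nat_add_iff' 1).mpr (HurwitzZeta.hasSum_expZeta_of_one_lt_re a hs)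
  simp only [Finset.range_one, Finset.sum_singleton, Nat.cast_zero, mul_zero, Complex.exp_zero,
    zero_cpow hs0, div_zero, sub_zero] at h
  refine h.tendsto_sum_nat.congr fun N => Finset.sum_congr rfl fun k _ => ?_
  rw [div_eq_mul_inv, ← cpow_neg, ← Complex.exp_nat_mul, mul_comm]
  push_cast
  ring_nf

theorem expZeta_eq_polylog {a : ℝ} (ha : (a : UnitAddCircle) ≠ 0) {s : ℂ} (hs : 0 < s.re) :
    HurwitzZeta.expZeta a s = polylog (cexp (2 * π * I * a)) s := by
  have hz := (norm_exp_two_pi_I_mul a).le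
  have hz1 := exp_two_pi_I_mul_ne_one ha
  have hU : IsOpen {s : ℂ | 0 < s.re} := isOpen_lt continuous_const continuous_re
  refine AnalyticOnNhd.eqOn_of_preconnected_of_eventuallyEq
    ((HurwitzZeta.differentiable_expZeta_of_ne_zero ha).differentiableOn.analyticOnNhd hU)
    ((differentiableOn_polylog hz hz1).analyticOnNhd hU)
    (convex_halfSpace_re_gt 0).isPreconnected (z₀ := 2) (by simp) ?_ hs
  filter_upwards [(isOpen_lt continuous_const continuous_re).mem_nhds
    (show (1 : ℝ) < (2 : ℂ).re by simp)] with w hw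
  exact tendsto_nhds_unique (tendsto_polylogSum_expZeta a hw)
    (tendsto_polylogSum_polylog hz hz1 (by linarith [show (1 : ℝ) < w.re from hw]))

theorem tendsto_polylogSum_periodizedZeta {a : ℝ} (ha : (a : UnitAddCircle) ≠ 0) {s : ℂ}
    (hs : 0 < s.re) :
    Tendsto (polylogSum (cexp (2 * π * I * a)) s) atTop (𝓝 (periodizedZeta s a)) := by
  rw [periodizedZeta, expZeta_eq_polylog ha hs]
  exact tendsto_polylogSum_polylog (norm_exp_two_pi_I_mul a).le (exp_two_pi_I_mul_ne_one ha) hs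

theorem one_sub_mul_rpow_neg_le_rpow_sub_rpow {σ : ℝ} (hσ0 : 0 ≤ σ) (hσ1 : σ ≤ 1) {x : ℝ}
    (hx : 1 ≤ x) : (1 - σ) * x ^ (-σ) ≤ x ^ (1 - σ) - (x - 1) ^ (1 - σ) := by
  have hx0 : 0 < x := by linarith
  have hbern := rpow_one_add_le_one_add_mul_self (s := -x⁻¹)
    (by linarith [inv_le_one_of_one_le₀ hx]) (p := 1 - σ) (by linarith) (by linarith)
  have hmul := mul_le_mul_of_nonneg_left hbern (rpow_nonneg hx0.le (1 - σ))
  rw [← mul_rpow hx0.le (by linarith [inv_le_one_of_one_le₀ hx]),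
    show x * (1 + -x⁻¹) = x - 1 by field_simp; ring, mul_add, mul_one] at hmul
  have hpow : x ^ (1 - σ) * x⁻¹ = x ^ (-σ) := by
    rw [← rpow_neg_one, ← rpow_add hx0]
    ring_nf
  nlinarith [hpow]

theorem sum_range_rpow_neg_le {σ : ℝ} (hσ0 : 0 ≤ σ) (hσ1 : σ < 1) (M : ℕ) :
    ∑ k ∈ Finset.range M, ((k : ℝ) + 1) ^ (-σ) ≤ (M : ℝ) ^ (1 - σ) / (1 - σ) := by
  rw [le_div_iff₀ (by linarith), Finset.sum_mul]
  calc ∑ k ∈ Finset.range M, ((k : ℝ) + 1) ^ (-σ) * (1 - σ)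
      ≤ ∑ k ∈ Finset.range M, (((k + 1 : ℕ) : ℝ) ^ (1 - σ) - (k : ℝ) ^ (1 - σ)) := by
        refine Finset.sum_le_sum fun k _ => ?_
        have := one_sub_mul_rpow_neg_le_rpow_sub_rpow hσ0 hσ1.le (x := k + 1) (by simp)
        rw [add_sub_cancel_right] at this
        push_cast
        linarith
    _ = (M : ℝ) ^ (1 - σ) := by
        rw [Finset.sum_range_sub (fun k : ℕ => (k : ℝ) ^ (1 - σ)), Nat.cast_zero,
          zero_rpow (by linarith), sub_zero]

theorem norm_polylogSum_le_rpow {z s : ℂ} (hz : ‖z‖ ≤ 1) (hσ0 : 0 ≤ s.re) (hσ1 : s.re < 1)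
    (N : ℕ) : ‖polylogSum z s N‖ ≤ (N : ℝ) ^ (1 - s.re) / (1 - s.re) := by
  refine (norm_sum_le _ _).trans ((Finset.sum_le_sum fun k _ => ?_).trans
    (sum_range_rpow_neg_le hσ0 hσ1 N))
  rw [norm_mul, norm_natCast_succ_cpow_neg, norm_pow]
  exact mul_le_of_le_one_right (by positivity) (pow_le_one₀ (norm_nonneg z) hz)

theorem norm_polylogSum_le {z s : ℂ} (hz : ‖z‖ ≤ 1) (hz1 : z ≠ 1) (hσ0 : 0 < s.re)
    (hσ1 : s.re < 1) (N : ℕ) :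
    ‖polylogSum z s N‖ ≤ (3 / (1 - s.re) + 4 * ‖s‖ / s.re) * ‖1 - z‖⁻¹ ^ (1 - s.re) := by
  set T := ‖1 - z‖⁻¹
  have hT : 0 < T := inv_pos.mpr (norm_pos_iff.mpr (sub_ne_zero.mpr hz1.symm))
  have hT2 : 1 / 2 ≤ T := by
    rw [one_div]
    refine inv_anti₀ (inv_pos.mp hT) ?_
    linarith [norm_sub_le (1 : ℂ) z, norm_one (α := ℂ)]
  -- the crossover scale `M ≈ ‖1 - z‖⁻¹` balances the trivial bound against the Abel summation bound
  set M := ⌈T⌉₊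
  have hTM : T ≤ M := Nat.le_ceil T
  have hMT : (M : ℝ) < T + 1 := Nat.ceil_lt_add_one hT.le
  have hhead : ∀ n ≤ M, ‖polylogSum z s n‖ ≤ 3 / (1 - s.re) * T ^ (1 - s.re) := fun n hn =>
    calc ‖polylogSum z s n‖ ≤ (3 * T) ^ (1 - s.re) / (1 - s.re) := by
          refine (norm_polylogSum_le_rpow hz hσ0.le hσ1 n).trans ?_
          gcongr
          exact (Nat.cast_le.mpr hn).trans (by linarith)
      _ ≤ 3 / (1 - s.re) * T ^ (1 - s.re) := by
          rw [mul_rpow (by norm_num) hT.le, div_mul_eq_mul_div]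
          have h3 : (3 : ℝ) ^ (1 - s.re) ≤ 3 := rpow_le_self_of_one_le (by norm_num) (by linarith)
          gcongr
  rcases le_total N M with hNM | hMN
  · refine (hhead N hNM).trans ?_
    gcongr
    exact le_add_of_nonneg_right (by positivity)
  have htail : ‖polylogSum z s N - polylogSum z s M‖ ≤ 4 * ‖s‖ / s.re * T ^ (1 - s.re) :=
    calc _ ≤ 4 * ‖s‖ / s.re * T * ((M : ℝ) + 1) ^ (-s.re) := by
          convert norm_polylogSum_sub_le hz hz1 hσ0 hMN using 2
          simp only [T]
          field_simp
      _ ≤ 4 * ‖s‖ / s.re * T * T ^ (-s.re) := by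
          exact mul_le_mul_of_nonneg_left (rpow_le_rpow_of_nonpos hT (by linarith) (by linarith))
            (by positivity)
      _ = 4 * ‖s‖ / s.re * T ^ (1 - s.re) := by
          rw [mul_assoc, ← rpow_one_add' hT.le (by linarith), ← sub_eq_add_neg]
  calc ‖polylogSum z s N‖ ≤ ‖polylogSum z s M‖ + ‖polylogSum z s N - polylogSum z s M‖ :=
        norm_le_norm_add_norm_sub' _ _
    _ ≤ _ := by linarith [hhead M le_rfl]

theorem coe_ne_zero_of_mem_Ioo {a : ℝ} (ha : a ∈ Ioo 0 1) : (a : UnitAddCircle) ≠ 0 := by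
  rw [Ne, AddCircle.coe_eq_zero_iff_of_mem_Ico (Ioo_subset_Ico_self ha)]
  exact ha.1.ne'

theorem norm_one_sub_exp_two_pi_I_mul_inv_le {a : ℝ} (ha : a ∈ Ioo 0 1) :
    ‖1 - cexp (2 * π * I * a)‖⁻¹ ≤ a⁻¹ + (1 - a)⁻¹ := by
  obtain ⟨ha0, ha1⟩ := ha
  have hsin : 0 < Real.sin (π * a) :=
    sin_pos_of_pos_of_lt_pi (by positivity) (by nlinarith [pi_pos])
  have hnorm : ‖1 - cexp (2 * π * I * a)‖ = 2 * Real.sin (π * a) := by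
    rw [norm_sub_rev, show 2 * π * I * a = I * ((2 * π * a : ℝ) : ℂ) by push_cast; ring,
      norm_exp_I_mul_ofReal_sub_one, show 2 * π * a / 2 = π * a by ring, Real.norm_eq_abs,
      abs_of_pos (by positivity)]
  -- Jordan's inequality `2x/π ≤ sin x` on `[0, π/2]`, at `x = πa` or at `x = π(1 - a)`
  rw [hnorm]
  rcases le_total a (1 / 2) with h | h
  · have hj := le_sin_mul (x := 2 * a) (by linarith) (by linarith)
    rw [show π / 2 * (2 * a) = π * a by ring] at hj
    calc (2 * Real.sin (π * a))⁻¹ ≤ a⁻¹ := inv_anti₀ ha0 (by linarith)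
      _ ≤ a⁻¹ + (1 - a)⁻¹ := le_add_of_nonneg_right (inv_nonneg.mpr (by linarith))
  · have hj := le_sin_mul (x := 2 * (1 - a)) (by linarith) (by linarith)
    rw [show π / 2 * (2 * (1 - a)) = π - π * a by ring, Real.sin_pi_sub] at hj
    calc (2 * Real.sin (π * a))⁻¹ ≤ (1 - a)⁻¹ := inv_anti₀ (by linarith) (by linarith)
      _ ≤ a⁻¹ + (1 - a)⁻¹ := le_add_of_nonneg_left (inv_nonneg.mpr ha0.le)

theorem norm_polylogSum_exp_le {s : ℂ} (hσ0 : 0 < s.re) (hσ1 : s.re < 1) {a : ℝ}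
    (ha : a ∈ Ioo 0 1) (N : ℕ) :
    ‖polylogSum (cexp (2 * π * I * a)) s N‖
      ≤ (3 / (1 - s.re) + 4 * ‖s‖ / s.re) * (a ^ (s.re - 1) + (1 - a) ^ (s.re - 1)) := by
  refine (norm_polylogSum_le (norm_exp_two_pi_I_mul a).le
    (exp_two_pi_I_mul_ne_one (coe_ne_zero_of_mem_Ioo ha)) hσ0 hσ1 N).trans ?_
  have ha0 := ha.1.le
  have ha1 : 0 ≤ 1 - a := by linarith [ha.2]
  gcongr
  calc ‖1 - cexp (2 * π * I * a)‖⁻¹ ^ (1 - s.re) ≤ (a⁻¹ + (1 - a)⁻¹) ^ (1 - s.re) :=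
        rpow_le_rpow (by positivity) (norm_one_sub_exp_two_pi_I_mul_inv_le ha) (by linarith)
    _ ≤ a⁻¹ ^ (1 - s.re) + (1 - a)⁻¹ ^ (1 - s.re) :=
        rpow_add_le_add_rpow (by positivity) (by positivity) (by linarith) (by linarith)
    _ = a ^ (s.re - 1) + (1 - a) ^ (s.re - 1) := by
        rw [inv_rpow ha0, inv_rpow ha1, ← rpow_neg ha0, ← rpow_neg ha1, neg_sub]

theorem integrableOn_rpow_add_one_sub_rpow {σ : ℝ} (hσ : 0 < σ) :
    IntegrableOn (fun a : ℝ => a ^ (σ - 1) + (1 - a) ^ (σ - 1)) (Ioo 0 1) := by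
  have h := intervalIntegral.intervalIntegrable_rpow' (a := 0) (b := 1) (r := σ - 1) (by linarith)
  have h' : IntervalIntegrable (fun a : ℝ => (1 - a) ^ (σ - 1)) volume 0 1 := by
    simpa using (h.comp_sub_left 1).symm
  exact ((intervalIntegrable_iff_integrableOn_Ioc_of_le zero_le_one).mp (h.add h')).mono_set
    Ioo_subset_Ioc_self

theorem integral_exp_two_pi_I_int_mul (n : ℤ) :
    ∫ a in Ioo (0 : ℝ) 1, cexp (2 * π * I * n * a) = if n = 0 then 1 else 0 := by
  rw [← integral_Ioc_eq_integral_Ioo, ← intervalIntegral.integral_of_le zero_le_one]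
  split_ifs with hn
  · simp [hn]
  have hc : 2 * π * I * n ≠ 0 := by simp [pi_ne_zero, I_ne_zero, hn]
  rw [integral_exp_mul_complex hc,
    show 2 * π * I * n * (1 : ℝ) = n * (2 * π * I) by push_cast; ring, exp_int_mul_two_pi_mul_I]
  simp

theorem integral_polylogSum_exp_mul_exp (s : ℂ) (N : ℕ) (k : ℤ) :
    ∫ a in Ioo (0 : ℝ) 1, polylogSum (cexp (2 * π * I * a)) s N * cexp (-(2 * π * I * k * a))
      = ∑ j ∈ Finset.range N, if ((j + 1 : ℕ) : ℤ) = k then ((j + 1 : ℕ) : ℂ) ^ (-s) else 0 := by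
  have hterm : ∀ j : ℕ, ∀ a : ℝ,
      ((j + 1 : ℕ) : ℂ) ^ (-s) * cexp (2 * π * I * a) ^ (j + 1) * cexp (-(2 * π * I * k * a))
        = ((j + 1 : ℕ) : ℂ) ^ (-s) * cexp (2 * π * I * (((j + 1 : ℕ) : ℤ) - k : ℤ) * a) := by
    intro j a
    rw [mul_assoc, ← Complex.exp_nat_mul, ← Complex.exp_add]
    push_cast
    ring_nf
  simp_rw [polylogSum, Finset.sum_mul, hterm]
  rw [integral_finsetSum _ fun j _ => (Continuous.integrableOn_Icc (by fun_prop)).mono_set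
    Ioo_subset_Icc_self]
  refine Finset.sum_congr rfl fun j _ => ?_
  rw [integral_const_mul, integral_exp_two_pi_I_int_mul]
  simp only [sub_eq_zero, mul_ite, mul_one, mul_zero]

theorem tendsto_integral_polylogSum_exp_mul_exp (s : ℂ) (k : ℤ) :
    Tendsto (fun N => ∫ a in Ioo (0 : ℝ) 1,
        polylogSum (cexp (2 * π * I * a)) s N * cexp (-(2 * π * I * k * a)))
      atTop (𝓝 (if 0 < k then (k : ℂ) ^ (-s) else 0)) := by
  simp_rw [integral_polylogSum_exp_mul_exp]
  split_ifs with hk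
  · obtain ⟨m, rfl⟩ : ∃ m : ℕ, k = ((m + 1 : ℕ) : ℤ) := ⟨k.toNat - 1, by omega⟩
    simp_rw [Nat.cast_inj, add_left_inj, Finset.sum_ite_eq']
    refine tendsto_const_nhds.congr' (eventually_atTop.2 ⟨m + 1, fun N hN => ?_⟩)
    dsimp only
    rw [if_pos (Finset.mem_range.mpr (by omega))]
    norm_cast
  · have hne : ∀ j : ℕ, ((j + 1 : ℕ) : ℤ) ≠ k := fun j => by omega
    simp only [hne, if_false, Finset.sum_const_zero]
    exact tendsto_const_nhds

theorem integrable_of_tendsto_of_norm_le {α E : Type*} [MeasurableSpace α]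
    [NormedAddCommGroup E] {μ : Measure α} {F : ℕ → α → E} {f : α → E} {g : α → ℝ}
    (hF : ∀ n, AEStronglyMeasurable (F n) μ) (hg : Integrable g μ)
    (hFg : ∀ n, ∀ᵐ a ∂μ, ‖F n a‖ ≤ g a)
    (hlim : ∀ᵐ a ∂μ, Tendsto (fun n => F n a) atTop (𝓝 (f a))) : Integrable f μ :=
  hg.mono' (aestronglyMeasurable_of_tendsto_ae _ hF hlim)
    (by filter_upwards [hlim, ae_all_iff.mpr hFg] with a ha hle using le_of_tendsto' ha.norm hle)

theorem periodizedZeta_fourierCoeff_general (s : ℂ) (hσ0 : 0 < s.re) (hσ1 : s.re < 1) :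
    MeasureTheory.IntegrableOn (periodizedZeta s) (Set.Ioo (0 : ℝ) 1) ∧
    (∀ k : ℤ, 1 ≤ k →
      (∫ a in Set.Ioo (0 : ℝ) 1, periodizedZeta s a * Complex.exp (-(2 * π * Complex.I * k * a)))
        = (k : ℂ) ^ (-s)) ∧
    (∀ k : ℤ, k ≤ 0 →
      (∫ a in Set.Ioo (0 : ℝ) 1, periodizedZeta s a * Complex.exp (-(2 * π * Complex.I * k * a)))
        = 0) := by
  let P : ℕ → ℝ → ℂ := fun N a => polylogSum (cexp (2 * π * I * a)) s N
  let bound : ℝ → ℝ := fun a =>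
    (3 / (1 - s.re) + 4 * ‖s‖ / s.re) * (a ^ (s.re - 1) + (1 - a) ^ (s.re - 1))
  have hP : ∀ N, AEStronglyMeasurable (P N) (volume.restrict (Ioo 0 1)) := fun N =>
    (show Continuous (P N) by unfold P polylogSum; fun_prop).aestronglyMeasurable
  have hbound : IntegrableOn bound (Ioo 0 1) := (integrableOn_rpow_add_one_sub_rpow hσ0).const_mul _
  have hPb : ∀ N, ∀ᵐ a ∂volume.restrict (Ioo 0 1), ‖P N a‖ ≤ bound a := fun N =>
    ae_restrict_of_forall_mem measurableSet_Ioo fun a ha => norm_polylogSum_exp_le hσ0 hσ1 ha N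
  have hlim : ∀ᵐ a ∂volume.restrict (Ioo 0 1), Tendsto (P · a) atTop (𝓝 (periodizedZeta s a)) :=
    ae_restrict_of_forall_mem measurableSet_Ioo fun a ha =>
      tendsto_polylogSum_periodizedZeta (coe_ne_zero_of_mem_Ioo ha) hσ0
  have hcoeff : ∀ k : ℤ, ∫ a in Ioo (0 : ℝ) 1, periodizedZeta s a * cexp (-(2 * π * I * k * a))
      = if 0 < k then (k : ℂ) ^ (-s) else 0 := fun k =>
    tendsto_nhds_unique (tendsto_integral_of_dominated_convergence bound
      (fun N => (hP N).mul (by fun_prop : Continuous _).aestronglyMeasurable) hbound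
      (fun N => by filter_upwards [hPb N] with a ha; simpa [norm_exp] using ha)
      (by filter_upwards [hlim] with a ha using ha.mul_const _))
      (tendsto_integral_polylogSum_exp_mul_exp s k)
  refine ⟨integrable_of_tendsto_of_norm_le hP hbound hPb hlim, fun k hk => ?_, fun k hk => ?_⟩
  · rw [hcoeff, if_pos (by omega)]
  · rw [hcoeff, if_neg (by omega)]

/-- for `0 < Re s < 1` and `|Im s| > 1`, `F_s` is integrable on `(0,1)` and its
Fourier coefficients are `k^{-s}` for `k ≥ 1` and `0` for `k ≤ 0`. -/
theorem periodizedZeta_fourierCoeff (s : ℂ) (hσ0 : 0 < s.re) (hσ1 : s.re < 1)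
    (ht : 1 < |s.im|) :
    MeasureTheory.IntegrableOn (periodizedZeta s) (Set.Ioo (0 : ℝ) 1) ∧
    (∀ k : ℤ, 1 ≤ k →
      (∫ a in Set.Ioo (0 : ℝ) 1, periodizedZeta s a * Complex.exp (-(2 * π * Complex.I * k * a)))
        = (k : ℂ) ^ (-s)) ∧
    (∀ k : ℤ, k ≤ 0 →
      (∫ a in Set.Ioo (0 : ℝ) 1, periodizedZeta s a * Complex.exp (-(2 * π * Complex.I * k * a)))
        = 0) :=
  periodizedZeta_fourierCoeff_general s hσ0 hσ1
end
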